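/- arXiv:2208.06358 — 3 statements merged into one kernel-verified Lean document; each statement's English description precedes it below -/
import Mathlib

section
/- Let D be a strongly connected digraph and v ∈ V(D). For each integer i ≥ 0 let L_i^+ = {x ∈ V(D) : dist_D(v,x) = i} be the i-th out-BFS layer from v. Then χ⃗(D) ≤ 2·max_{i ≥ 0} χ⃗(D[L_i^+]). -/
/-- A digraph on vertex type `V` is modeled as an arc relation `A : V → V → Prop`.
`Induce A X` is the arc relation of the induced subdigraph `D[X]`. -/
def Induce {V : Type*} (A : V → V → Prop) (X : Set V) : V → V → Prop :=
  fun u v => u ∈ X ∧ v ∈ X ∧ A u v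

/-- `l` is (the vertex list of) a directed cycle: at least 2 vertices, consecutive
vertices joined by arcs, all vertices distinct, and an arc from the last vertex back
to the first. Its length (number of arcs) is `l.length`. -/
def IsDicycleList {V : Type*} (A : V → V → Prop) (l : List V) : Prop :=
  2 ≤ l.length ∧ l.Chain' A ∧ l.Nodup ∧
    ∃ x y, l.getLast? = some x ∧ l.head? = some y ∧ A x y

/-- The digraph has no directed cycle. -/
def AcyclicRel {V : Type*} (A : V → V → Prop) : Prop :=
  ¬ ∃ l : List V, IsDicycleList A l

/-- The dichromatic number: the least `k` such that the vertices can be colored with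
`k` colors so that each color class induces an acyclic subdigraph. -/
noncomputable def dichrom {V : Type*} (A : V → V → Prop) : ℕ :=
  sInf {k | ∃ f : V → Fin k, ∀ i, AcyclicRel (Induce A {v | f v = i})}

/-- `l` is a directed path from `x` to `y` (possibly of length zero, i.e. `l = [x]`).
Its length (number of arcs) is `l.length - 1`. -/
def IsDipathFromTo {V : Type*} (A : V → V → Prop) (x y : V) (l : List V) : Prop :=
  l.Chain' A ∧ l.Nodup ∧ l.head? = some x ∧ l.getLast? = some y

/-- Directed distance from `x` to `y`: length of a shortest directed path. -/
noncomputable def ddist {V : Type*} (A : V → V → Prop) (x y : V) : ℕ :=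
  sInf {n | ∃ l, IsDipathFromTo A x y l ∧ l.length = n + 1}

/-- The digraph is strongly connected. -/
def StronglyConnectedRel {V : Type*} (A : V → V → Prop) : Prop :=
  ∀ x y : V, ∃ l, IsDipathFromTo A x y l

/-- The induced subdigraph `D[X]` is strongly connected. -/
def StronglyConnectedOn {V : Type*} (A : V → V → Prop) (X : Set V) : Prop :=
  ∀ x ∈ X, ∀ y ∈ X, ∃ l, IsDipathFromTo (Induce A X) x y l

/-- `X` is a strongly connected component: a maximal nonempty set inducing a strongly
connected subdigraph. -/
def IsSCC {V : Type*} (A : V → V → Prop) (X : Set V) : Prop :=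
  X.Nonempty ∧ StronglyConnectedOn A X ∧
    ∀ Y : Set V, X ⊆ Y → StronglyConnectedOn A Y → Y = X

/-- The internal vertices of a path given as a vertex list. -/
def Internal {V : Type*} (l : List V) : List V := l.dropLast.tail

/-- `D = (V, A)` contains a subdivision of `F = (W, B)` in which the subdivision path
of each arc `(u,v)` has length (number of arcs) satisfying the predicate `len u v`:
there are pairwise distinct branch vertices `b w`, and for each arc of `F` a directed
path of positive length between the corresponding branch vertices, these paths being
pairwise internally disjoint and internally avoiding all branch vertices. -/
def IsSubdivisionWith {V W : Type*} (A : V → V → Prop) (B : W → W → Prop)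
    (len : W → W → ℕ → Prop) : Prop :=
  ∃ b : W → V, Function.Injective b ∧
  ∃ P : ∀ u v, B u v → List V,
    (∀ u v (h : B u v), IsDipathFromTo A (b u) (b v) (P u v h) ∧
      2 ≤ (P u v h).length ∧ len u v ((P u v h).length - 1)) ∧
    (∀ u v (h : B u v), ∀ x ∈ Internal (P u v h),
      (∀ w : W, x ≠ b w) ∧
      ∀ u' v' (h' : B u' v'), (u, v) ≠ (u', v') → x ∉ P u' v' h')

/-! Colour the vertex `x` at distance `d(x)` from `v` by the pair (parity of `d(x)`, colour of `x`
in an optimal colouring of its layer `L_{d(x)}`). An arc `a → b` satisfies `d(b) ≤ d(a) + 1`, so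
inside a class of fixed parity the distance never increases along an arc; around a directed
cycle it is therefore constant, and a monochromatic cycle would lie in a single colour class
of a single layer. -/

section

variable {V : Type*}

section Cycles

variable {A R S : V → V → Prop} {X Y : Set V} {l : List V}

theorem IsDicycleList.mono (h : IsDicycleList R l) (hRS : ∀ a ∈ l, ∀ b ∈ l, R a b → S a b) :
    IsDicycleList S l := by
  obtain ⟨hlen, hch, hnd, x, y, hx, hy, hxy⟩ := h
  exact ⟨hlen, hch.imp_of_mem_imp fun a b ha hb => hRS a ha b hb, hnd, x, y, hx, hy,
    hRS x (List.mem_of_mem_getLast? hx) y (List.mem_of_mem_head? hy) hxy⟩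

theorem isDicycleList_induce_iff :
    IsDicycleList (Induce A X) l ↔ IsDicycleList A l ∧ ∀ x ∈ l, x ∈ X := by
  refine ⟨fun h => ⟨h.mono fun _ _ _ _ hab => hab.2.2, fun x hx => ?_⟩,
    fun ⟨h, hX⟩ => h.mono fun a ha b hb hab => ⟨hX a ha, hX b hb, hab⟩⟩
  obtain ⟨-, hch, -, z, y, -, hy, hzy⟩ := h
  obtain ⟨t, rfl⟩ := List.head?_eq_some_iff.1 hy
  rcases List.mem_cons.1 hx with rfl | hxt
  · exact hzy.2.1
  · exact hch.induction (· ∈ X) _ (fun _ _ hab _ => hab.2.1) (fun _ => by simpa using hzy.2.1) x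
      (List.mem_cons_of_mem _ hxt)

theorem induce_induce : Induce (Induce A X) Y = Induce A (X ∩ Y) := by
  ext a b
  simp only [Induce, Set.mem_inter_iff]
  tauto

theorem AcyclicRel.induce_mono (hXY : X ⊆ Y) (h : AcyclicRel (Induce A Y)) :
    AcyclicRel (Induce A X) := by
  rintro ⟨l, hl⟩
  rw [isDicycleList_induce_iff] at hl
  exact h ⟨l, isDicycleList_induce_iff.2 ⟨hl.1, fun x hx => hXY (hl.2 x hx)⟩⟩

theorem acyclicRel_induce_of_subsingleton (hX : X.Subsingleton) : AcyclicRel (Induce A X) := by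
  rintro ⟨l, hl⟩
  rw [isDicycleList_induce_iff] at hl
  obtain ⟨⟨hlen, -, hnd, -⟩, hX'⟩ := hl
  match l, hlen, hnd with
  | a :: b :: _, _, hnd =>
    exact (List.nodup_cons.1 hnd).1 (hX (hX' b (by simp)) (hX' a (by simp)) ▸ List.mem_cons_self)

theorem IsDicycleList.eq_of_antitone {β : Type*} [PartialOrder β] (h : IsDicycleList R l)
    (φ : V → β) (hφ : ∀ a b, R a b → φ b ≤ φ a) : ∀ x ∈ l, ∀ y ∈ l, φ x = φ y := by
  obtain ⟨-, hch, -, z, y, hz, hy, hzy⟩ := h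
  have hne : l ≠ [] := by rintro rfl; simp at hy
  have hhead : l.head hne = y := by simpa [List.head?_eq_some_head hne] using hy
  have hlast : l.getLast hne = z := by simpa [List.getLast?_eq_some_getLast hne] using hz
  have le_head : ∀ x ∈ l, φ x ≤ φ y := hch.induction (φ · ≤ φ y) l
    (fun _ _ hab hx => (hφ _ _ hab).trans hx) (fun _ => hhead ▸ le_rfl)
  have last_le : ∀ x ∈ l, φ z ≤ φ x := hch.backwards_induction (φ z ≤ φ ·) l
    (fun _ _ hab hb => hb.trans (hφ _ _ hab)) (fun _ => hlast ▸ le_rfl)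
  have level : ∀ x ∈ l, φ x = φ y := fun x hx =>
    (le_head x hx).antisymm ((hφ z y hzy).trans (last_le x hx))
  exact fun x hx x' hx' => (level x hx).trans (level x' hx').symm

theorem acyclicRel_induce_of_levels {β : Type*} [PartialOrder β] (φ : V → β)
    (hφ : ∀ a b, Induce A X a b → φ b ≤ φ a)
    (hlevel : ∀ i, AcyclicRel (Induce A (X ∩ {x | φ x = i}))) : AcyclicRel (Induce A X) := by
  rintro ⟨l, hl⟩
  have hconst := hl.eq_of_antitone φ hφ
  rw [isDicycleList_induce_iff] at hl
  obtain ⟨hA, hX⟩ := hl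
  obtain ⟨y, hy⟩ : ∃ y, y ∈ l := List.exists_mem_of_length_pos (by have := hA.1; omega)
  exact hlevel (φ y) ⟨l, isDicycleList_induce_iff.2
    ⟨hA, fun x hx => ⟨hX x hx, hconst x hx y hy⟩⟩⟩

end Cycles

section Coloring

variable {A : V → V → Prop} {k : ℕ}

theorem acyclicRel_classes_of_injective {α : Type*} {f : V → α} (hf : f.Injective) (a : α) :
    AcyclicRel (Induce A {x | f x = a}) :=
  acyclicRel_induce_of_subsingleton fun _ hx _ hy => hf (hx.trans hy.symm)

theorem acyclicRel_classes_comp {α β : Type*} {f : V → α} {e : α → β} (he : e.Injective)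
    (hf : ∀ a, AcyclicRel (Induce A {x | f x = a})) (b : β) :
    AcyclicRel (Induce A {x | e (f x) = b}) := by
  by_cases hb : ∃ a, e a = b
  · obtain ⟨a, rfl⟩ := hb
    simpa only [he.eq_iff] using hf a
  · exact acyclicRel_induce_of_subsingleton fun x hx => (hb ⟨f x, hx⟩).elim

theorem dichrom_le_of_coloring (f : V → Fin k)
    (hf : ∀ i, AcyclicRel (Induce A {x | f x = i})) : dichrom A ≤ k :=
  Nat.sInf_le ⟨f, hf⟩

theorem dichrom_le_card [Finite V] : dichrom A ≤ Nat.card V :=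
  dichrom_le_of_coloring _ (acyclicRel_classes_of_injective (Finite.equivFin V).injective)

theorem exists_coloring_of_dichrom_le [Finite V] (hk : dichrom A ≤ k) :
    ∃ f : V → Fin k, ∀ i, AcyclicRel (Induce A {x | f x = i}) := by
  have hne : {n | ∃ f : V → Fin n, ∀ i, AcyclicRel (Induce A {x | f x = i})}.Nonempty :=
    ⟨_, _, acyclicRel_classes_of_injective (Finite.equivFin V).injective⟩
  obtain ⟨f, hf⟩ := Nat.sInf_mem hne
  exact ⟨fun x => Fin.castLE hk (f x), acyclicRel_classes_comp (Fin.castLE_injective hk) hf⟩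

end Coloring

theorem dichrom_le_two_mul_of_levels {A : V → V → Prop} [Finite V] (φ : V → ℕ)
    (hφ : ∀ a b, A a b → φ b ≤ φ a + 1) {m : ℕ}
    (hm : ∀ i, dichrom (Induce A {x | φ x = i}) ≤ m) : dichrom A ≤ 2 * m := by
  choose g hg using fun i => exists_coloring_of_dichrom_le (hm i)
  let F : V → Fin 2 × Fin m := fun x => (⟨φ x % 2, Nat.mod_lt _ two_pos⟩, g (φ x) x)
  refine dichrom_le_of_coloring (fun x => finProdFinEquiv (F x))
    (acyclicRel_classes_comp finProdFinEquiv.injective fun c => ?_)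
  refine acyclicRel_induce_of_levels φ ?_ fun i => ?_
  · rintro a b ⟨ha, hb, hab⟩
    have hparity : φ a % 2 = φ b % 2 := congrArg (fun p => p.1.val) (ha.trans hb.symm)
    have := hφ a b hab
    omega
  · have hclass := hg i c.2
    rw [induce_induce] at hclass
    refine hclass.induce_mono ?_
    rintro x ⟨hx, rfl⟩
    exact ⟨rfl, congrArg Prod.snd hx⟩

section Distance

variable {A : V → V → Prop} {x y w : V} {l : List V}

theorem IsDipathFromTo.ne_nil (h : IsDipathFromTo A x y l) : l ≠ [] := by
  rintro rfl
  simp [IsDipathFromTo] at h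

theorem IsDipathFromTo.ddist_add_one_le (h : IsDipathFromTo A x y l) :
    ddist A x y + 1 ≤ l.length := by
  have := List.length_pos_iff.2 h.ne_nil
  have : ddist A x y ≤ l.length - 1 := Nat.sInf_le ⟨l, h, by omega⟩
  omega

theorem IsDipathFromTo.exists_length_eq_ddist (h : IsDipathFromTo A x y l) :
    ∃ l', IsDipathFromTo A x y l' ∧ l'.length = ddist A x y + 1 :=
  Nat.sInf_mem (s := {n | ∃ l, IsDipathFromTo A x y l ∧ l.length = n + 1})
    ⟨l.length - 1, l, h, by have := List.length_pos_iff.2 h.ne_nil; omega⟩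

theorem IsDipathFromTo.concat (h : IsDipathFromTo A x y l) (hyw : A y w) (hw : w ∉ l) :
    IsDipathFromTo A x w (l ++ [w]) := by
  obtain ⟨hch, hnd, hx, hy⟩ := h
  refine ⟨List.isChain_append.2 ⟨hch, List.isChain_singleton _, ?_⟩,
    List.nodup_append.2 ⟨hnd, List.nodup_singleton _, ?_⟩, ?_, List.getLast?_concat⟩
  · intro a ha b hb
    rw [hy, Option.mem_some_iff] at ha
    rw [List.head?_singleton, Option.mem_some_iff] at hb
    exact ha ▸ hb ▸ hyw
  · rintro a ha b hb rfl
    exact hw (List.eq_of_mem_singleton hb ▸ ha)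
  · rw [List.head?_append, hx, Option.some_or]

theorem IsDipathFromTo.exists_prefix (h : IsDipathFromTo A x y l) (hw : w ∈ l) :
    ∃ l', IsDipathFromTo A x w l' ∧ l'.length ≤ l.length := by
  obtain ⟨hch, hnd, hx, -⟩ := h
  obtain ⟨l₁, l₂, rfl⟩ := List.append_of_mem hw
  have hpre : l₁ ++ [w] <+: l₁ ++ w :: l₂ := ⟨l₂, by simp⟩
  refine ⟨l₁ ++ [w], ⟨hch.prefix hpre, hnd.sublist hpre.sublist, ?_, List.getLast?_concat⟩,
    hpre.length_le⟩
  cases l₁ <;> simp_all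

theorem ddist_le_ddist_add_one (hxy : ∃ l, IsDipathFromTo A x y l) (hyw : A y w) :
    ddist A x w ≤ ddist A x y + 1 := by
  obtain ⟨_, hl⟩ := hxy
  obtain ⟨l, hl, hlen⟩ := hl.exists_length_eq_ddist
  by_cases hw : w ∈ l
  · obtain ⟨l', hl', hle⟩ := hl.exists_prefix hw
    have := hl'.ddist_add_one_le
    omega
  · have := (hl.concat hyw hw).ddist_add_one_le
    simp only [List.length_append, List.length_singleton] at this
    omega

end Distance

end

/-- Out-BFS layering bound on the dichromatic number. -/
theorem stmt_1 {V : Type*} [Fintype V] (A : V → V → Prop)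
    (hSC : StronglyConnectedRel A) (v : V) :
    dichrom A ≤ 2 * sSup {n | ∃ i : ℕ, n = dichrom (Induce A {x | ddist A v x = i})} := by
  have hbdd : BddAbove {n | ∃ i : ℕ, n = dichrom (Induce A {x | ddist A v x = i})} :=
    ⟨Nat.card V, by rintro n ⟨i, rfl⟩; exact dichrom_le_card⟩
  exact dichrom_le_two_mul_of_levels (ddist A v)
    (fun a b hab => ddist_le_ddist_add_one (hSC v a) hab) fun i => le_csSup hbdd ⟨i, rfl⟩
end

section
/- Let k ≥ 2 be an integer and D a digraph. If χ⃗(D) ≥ k, then D contains a directed cycle of length at least k. -/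
/-! If every directed cycle has length at most `m ≥ 1`, then in any vertex set `S` the last vertex
`v` of a longest path inside `S` has all its out-neighbours in `S` on that path, and closing a
cycle through such an out-neighbour shows it is among the last `m` vertices of the path; so `v`
has fewer than `m` out-neighbours in `S`. Colour `S \ {v}` by induction and give `v` a colour
missing from its out-neighbours: a monochromatic cycle through `v` would have to leave `v` along
an arc to a vertex of the same colour. -/

open Finset

section

variable {V : Type*} {A : V → V → Prop}

lemma IsDicycleList.imp_of_mem {B : V → V → Prop} {l : List V} (hl : IsDicycleList A l)
    (hAB : ∀ x ∈ l, ∀ y ∈ l, A x y → B x y) : IsDicycleList B l := by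
  obtain ⟨hlen, hchain, hnodup, x, y, hx, hy, hxy⟩ := hl
  exact ⟨hlen, List.IsChain.imp_of_mem_imp (fun x y hx hy => hAB x hx y hy) hchain, hnodup,
    x, y, hx, hy, hAB x (List.mem_of_getLast? hx) y (List.mem_of_head? hy) hxy⟩

lemma IsDicycleList.exists_succ {l : List V} (hl : IsDicycleList A l) {v : V} (hv : v ∈ l) :
    ∃ w ∈ l, w ≠ v ∧ A v w := by
  obtain ⟨hlen, hchain, hnodup, x, y, hx, hy, hxy⟩ := hl
  obtain ⟨s, t, rfl⟩ := List.append_of_mem hv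
  rcases t with _ | ⟨w, t⟩
  · obtain rfl : v = x := by simpa using hx
    rcases s with _ | ⟨y', s⟩
    · simp at hlen
    obtain rfl : y' = y := by simpa using hy
    refine ⟨y', by simp, fun h => ?_, hxy⟩
    subst h
    simp at hnodup
  · refine ⟨w, by simp, fun h => ?_, ?_⟩
    · subst h
      simp [List.nodup_append] at hnodup
    · exact (List.isChain_cons_cons.1 (List.IsChain.right_of_append hchain)).1

lemma acyclicRel_induce_update [DecidableEq V] {m : ℕ} {S : Finset V} {v : V} {f : V → Fin m}
    (hf : ∀ i, AcyclicRel (Induce A {x | x ∈ S.erase v ∧ f x = i})) {c : Fin m}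
    (hc : ∀ w ∈ S, w ≠ v → A v w → f w ≠ c) (i : Fin m) :
    AcyclicRel (Induce A {x | x ∈ S ∧ Function.update f v c x = i}) := by
  rintro ⟨l, hl⟩
  by_cases hv : v ∈ l
  · obtain ⟨w, -, hwv, ⟨-, hci⟩, ⟨hwS, hwi⟩, hvw⟩ := hl.exists_succ hv
    rw [Function.update_self] at hci
    rw [Function.update_of_ne hwv] at hwi
    exact hc w hwS hwv hvw (hwi.trans hci.symm)
  · have hrestrict :
        ∀ x ∈ l, x ∈ S → Function.update f v c x = i → x ∈ S.erase v ∧ f x = i := by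
      intro x hx hxS hxi
      have hxv : x ≠ v := ne_of_mem_of_not_mem hx hv
      rw [Function.update_of_ne hxv] at hxi
      exact ⟨Finset.mem_erase.2 ⟨hxv, hxS⟩, hxi⟩
    refine hf i ⟨l, hl.imp_of_mem fun x hx y hy ⟨⟨hxS, hxi⟩, ⟨hyS, hyi⟩, hxy⟩ => ?_⟩
    exact ⟨hrestrict x hx hxS hxi, hrestrict y hy hyS hyi, hxy⟩

lemma exists_longest_path (S : Finset V) (hS : S.Nonempty) :
    ∃ P : List V, P ≠ [] ∧ P.IsChain A ∧ P.Nodup ∧ (∀ x ∈ P, x ∈ S) ∧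
      ∀ Q : List V, Q.IsChain A → Q.Nodup → (∀ x ∈ Q, x ∈ S) → Q.length ≤ P.length := by
  classical
  set lengths :=
    {n | ∃ Q : List V, Q.IsChain A ∧ Q.Nodup ∧ (∀ x ∈ Q, x ∈ S) ∧ Q.length = n}
  have hbdd : BddAbove lengths := by
    refine ⟨#S, ?_⟩
    rintro _ ⟨Q, -, hQ, hQS, rfl⟩
    rw [← List.toFinset_card_of_nodup hQ]
    exact card_le_card fun x hx => hQS x (List.mem_toFinset.1 hx)
  obtain ⟨x, hx⟩ := hS
  have hsingleton : 1 ∈ lengths :=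
    ⟨[x], List.isChain_singleton x, List.nodup_singleton x, by simpa, rfl⟩
  obtain ⟨P, hP, hPnodup, hPS, hPlen⟩ := Nat.sSup_mem ⟨1, hsingleton⟩ hbdd
  refine ⟨P, ?_, hP, hPnodup, hPS, fun Q hQ hQnodup hQS =>
    hPlen ▸ le_csSup hbdd ⟨Q, hQ, hQnodup, hQS, rfl⟩⟩
  rw [← List.length_pos_iff, hPlen]
  exact le_csSup hbdd hsingleton

lemma mem_drop_of_getLast_adj {m : ℕ} (hcycle : ∀ l, IsDicycleList A l → l.length ≤ m)
    {P : List V} (hne : P ≠ []) (hP : P.IsChain A) (hPnodup : P.Nodup) {w : V} (hwP : w ∈ P)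
    (hwv : w ≠ P.getLast hne) (hvw : A (P.getLast hne) w) : w ∈ P.drop (P.length - m) := by
  obtain ⟨i, hi, rfl⟩ := List.getElem_of_mem hwP
  have hi' : i < P.length - 1 := by
    have : i ≠ P.length - 1 := fun h => hwv (by simp [List.getLast_eq_getElem, h])
    omega
  have hcyc : IsDicycleList A (P.drop i) := by
    refine ⟨by rw [List.length_drop]; omega, List.IsChain.drop hP i,
      hPnodup.sublist (List.drop_sublist _ _), P.getLast hne, P[i], ?_, by simp, hvw⟩
    rw [List.getLast?_drop, if_neg (by omega), List.getLast?_eq_some_getLast hne]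
  have hlen := hcycle _ hcyc
  rw [List.length_drop] at hlen
  rw [List.mem_drop_iff_getElem]
  exact ⟨i - (P.length - m), by omega, by congr 1; omega⟩

lemma exists_card_outNeighbors_lt [DecidableEq V] [DecidableRel A] {m : ℕ} (hm : 0 < m)
    (hcycle : ∀ l, IsDicycleList A l → l.length ≤ m) {S : Finset V} (hS : S.Nonempty) :
    ∃ v ∈ S, #{w ∈ S | w ≠ v ∧ A v w} < m := by
  obtain ⟨P, hne, hP, hPnodup, hPS, hmax⟩ := exists_longest_path (A := A) S hS
  set v := P.getLast hne
  set T := (P.drop (P.length - m)).toFinset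
  refine ⟨v, hPS v (List.getLast_mem hne), ?_⟩
  have hsub : {w ∈ S | w ≠ v ∧ A v w} ⊆ T.erase v := by
    intro w hw
    obtain ⟨hwS, hwv, hvw⟩ := Finset.mem_filter.1 hw
    have hwP : w ∈ P := by
      by_contra hwP
      have hext := hmax (P ++ [w]) ?_ ?_ ?_
      · simp at hext
      · exact List.isChain_append.2 ⟨hP, List.isChain_singleton w, by
          simpa [List.getLast?_eq_some_getLast hne] using hvw⟩
      · exact List.nodup_append.2 ⟨hPnodup, List.nodup_singleton w, by grind⟩
      · grind
    exact Finset.mem_erase.2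
      ⟨hwv, List.mem_toFinset.2 (mem_drop_of_getLast_adj hcycle hne hP hPnodup hwP hwv hvw)⟩
  have hdrop : P.drop (P.length - m) ≠ [] := by
    have := List.length_pos_iff.2 hne
    rw [← List.length_pos_iff, List.length_drop]
    omega
  have hv : v ∈ T := List.mem_toFinset.2 (by simpa [v] using List.getLast_mem hdrop)
  calc #{w ∈ S | w ≠ v ∧ A v w} ≤ #(T.erase v) := card_le_card hsub
    _ = #T - 1 := card_erase_of_mem hv
    _ < m := by
      have hT : #T ≤ P.length - (P.length - m) := List.length_drop ▸ List.toFinset_card_le _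
      have := card_pos.2 ⟨v, hv⟩
      omega

lemma exists_acyclic_coloring_of_forall_exists_card_lt [DecidableEq V] [DecidableRel A]
    {m : ℕ} (hm : 0 < m)
    (hdeg : ∀ S : Finset V, S.Nonempty → ∃ v ∈ S, #{w ∈ S | w ≠ v ∧ A v w} < m)
    (S : Finset V) : ∃ f : V → Fin m, ∀ i, AcyclicRel (Induce A {x | x ∈ S ∧ f x = i}) := by
  induction S using Finset.strongInduction with
  | H S ih =>
    rcases S.eq_empty_or_nonempty with rfl | hS
    · refine ⟨fun _ => ⟨0, hm⟩, fun i ⟨l, hl⟩ => ?_⟩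
      obtain ⟨x, y, -, -, ⟨hx, -⟩, -⟩ := hl.2.2.2
      exact Finset.notMem_empty x hx
    obtain ⟨v, hv, hdeg_v⟩ := hdeg S hS
    obtain ⟨f, hf⟩ := ih (S.erase v) (Finset.erase_ssubset hv)
    have hcard : #({w ∈ S | w ≠ v ∧ A v w}.image f) < #(univ : Finset (Fin m)) := by
      simpa using (card_image_le).trans_lt hdeg_v
    obtain ⟨c, -, hc⟩ := Finset.exists_mem_notMem_of_card_lt_card hcard
    refine ⟨Function.update f v c, acyclicRel_induce_update hf fun w hwS hwv hvw hwc => hc ?_⟩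
    exact Finset.mem_image.2 ⟨w, Finset.mem_filter.2 ⟨hwS, hwv, hvw⟩, hwc⟩

lemma dichrom_le_of_forall_exists_card_lt [Fintype V] [DecidableEq V] [DecidableRel A]
    {m : ℕ} (hm : 0 < m)
    (hdeg : ∀ S : Finset V, S.Nonempty → ∃ v ∈ S, #{w ∈ S | w ≠ v ∧ A v w} < m) :
    dichrom A ≤ m := by
  obtain ⟨f, hf⟩ := exists_acyclic_coloring_of_forall_exists_card_lt hm hdeg univ
  exact Nat.sInf_le ⟨f, by simpa only [mem_univ, true_and] using hf⟩

lemma dichrom_le_of_forall_length_le [Fintype V] {m : ℕ} (hm : 0 < m)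
    (hcycle : ∀ l, IsDicycleList A l → l.length ≤ m) : dichrom A ≤ m := by
  classical
  exact dichrom_le_of_forall_exists_card_lt hm fun _ => exists_card_outNeighbors_lt hm hcycle

end

/-- Dichromatic number at least `k ≥ 2` forces a directed cycle of length at least `k`. -/
theorem stmt_4 {V : Type*} [Fintype V] (A : V → V → Prop) (k : ℕ) (hk : 2 ≤ k)
    (h : k ≤ dichrom A) :
    ∃ l : List V, IsDicycleList A l ∧ k ≤ l.length := by
  by_contra! hshort
  have := dichrom_le_of_forall_length_le (A := A) (m := k - 1) (by omega) fun l hl =>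
    Nat.le_sub_one_of_lt (hshort l hl)
  omega
end

section
/- Let D be a strongly connected digraph, Z ⊆ V(D) a nonempty proper subset such that χ⃗(D[V(D)∖Z]) ≥ q − 1 for an integer q ≥ 2. Then there exists a directed path P in D of length exactly q − 1 whose endpoint lies in Z and all of whose other vertices lie outside Z. -/
/-!
Call a directed path meeting `Z` exactly in its last vertex an entry path. The last `q` vertices
of an entry path with at least `q` vertices form the required path, so it suffices to find a long
entry path. For `q = 2` any entry path starting outside `Z` will do. For `q ≥ 3`, the digraph
`D - Z` contains a directed cycle `C` of length at least `q - 1`: otherwise every vertex set has a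
vertex of out-degree less than `q - 2` inside it, and colouring greedily in that order uses only
`q - 2` colours; in a set of minimum out-degree at least `q - 2` a longest path closes up into a
long cycle. A shortest entry path starting on `C` leaves `C` immediately, so walking once around
`C` before it gives an entry path with at least `|C| + 1 ≥ q` vertices.
-/

section Dicycle

variable {V : Type*} {R R' : V → V → Prop} {l : List V}

theorem isDicycleList_iff_getElem :
    IsDicycleList R l ↔ 2 ≤ l.length ∧ l.Nodup ∧
      ∀ i (hi : i < l.length), R l[i] (l[(i + 1) % l.length]'(Nat.mod_lt _ (by omega))) := by
  simp only [IsDicycleList, List.getLast?_eq_getElem?, List.head?_eq_getElem?]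
  constructor
  · rintro ⟨h2, hc, hn, x, y, hx, hy, hxy⟩
    refine ⟨h2, hn, fun i hi => ?_⟩
    rcases Nat.lt_or_ge (i + 1) l.length with h | h
    · simpa only [Nat.mod_eq_of_lt h] using List.isChain_iff_getElem.1 hc i h
    · obtain rfl : i = l.length - 1 := by omega
      simp only [List.getElem?_eq_getElem (by omega : l.length - 1 < l.length),
        List.getElem?_eq_getElem (by omega : 0 < l.length), Option.some.injEq] at hx hy
      simpa [Nat.sub_add_cancel (by omega : 1 ≤ l.length), hx, hy] using hxy
  · rintro ⟨h2, hn, hR⟩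
    refine ⟨h2, List.isChain_iff_getElem.2 fun i hi => ?_, hn, l[l.length - 1], l[0], by simp,
      by simp, ?_⟩
    · simpa only [Nat.mod_eq_of_lt hi] using hR i (by omega)
    · simpa [Nat.sub_add_cancel (by omega : 1 ≤ l.length)] using hR (l.length - 1) (by omega)

namespace IsDicycleList

theorem mono_s16 (hl : IsDicycleList R l) (h : ∀ u ∈ l, ∀ w ∈ l, R u w → R' u w) :
    IsDicycleList R' l := by
  obtain ⟨h2, hn, hR⟩ := isDicycleList_iff_getElem.1 hl
  exact isDicycleList_iff_getElem.2
    ⟨h2, hn, fun i hi => h _ (List.getElem_mem _) _ (List.getElem_mem _) (hR i hi)⟩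

theorem exists_succ_s16 (hl : IsDicycleList R l) {v : V} (hv : v ∈ l) : ∃ w ∈ l, w ≠ v ∧ R v w := by
  obtain ⟨h2, hn, hR⟩ := isDicycleList_iff_getElem.1 hl
  obtain ⟨i, hi, rfl⟩ := List.mem_iff_getElem.1 hv
  refine ⟨_, List.getElem_mem _, fun he => ?_, hR i hi⟩
  have := (hn.getElem_inj_iff).1 he
  rcases Nat.lt_or_ge (i + 1) l.length with h | h
  · rw [Nat.mod_eq_of_lt h] at this; omega
  · rw [show i + 1 = l.length by omega, Nat.mod_self] at this; omega

theorem mem_of_induce {X : Set V} (hl : IsDicycleList (Induce R X) l) {v : V} (hv : v ∈ l) :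
    v ∈ X := by
  obtain ⟨_, -, -, h⟩ := hl.exists_succ_s16 hv
  exact h.1

theorem rotate (hl : IsDicycleList R l) (n : ℕ) : IsDicycleList R (l.rotate n) := by
  obtain ⟨h2, hn, hR⟩ := isDicycleList_iff_getElem.1 hl
  refine isDicycleList_iff_getElem.2 ⟨by simpa, List.nodup_rotate.2 hn, fun i hi => ?_⟩
  simp only [List.getElem_rotate, List.length_rotate]
  rw [List.length_rotate] at hi
  convert hR ((i + n) % l.length) (Nat.mod_lt _ (by omega)) using 2
  rw [Nat.mod_add_mod, Nat.mod_add_mod, Nat.add_right_comm]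

theorem isChain (hl : IsDicycleList R l) : l.IsChain R := hl.2.1

end IsDicycleList

end Dicycle

section Dichromatic

variable {V : Type*} {R : V → V → Prop}

open Finset

def DiColorable (R : V → V → Prop) (k : ℕ) : Prop :=
  ∃ f : V → Fin k, ∀ i, AcyclicRel (Induce R {v | f v = i})

theorem dichrom_le_of_diColorable {k : ℕ} (h : DiColorable R k) : dichrom R ≤ k :=
  Nat.sInf_le h

theorem exists_nonextendable_path [Finite V] {S : Finset V} (hS : S.Nonempty) :
    ∃ (l : List V) (e : V), l.IsChain (Induce R S) ∧ l.Nodup ∧ l.getLast? = some e ∧ e ∈ S ∧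
      ∀ w ∈ S, R e w → w ∈ l := by
  set paths := {l : List V | l.IsChain (Induce R S) ∧ l.Nodup ∧ ∀ x ∈ l, x ∈ S}
  have hfin : paths.Finite := (List.finite_length_le V #S).subset fun l ⟨_, hn, hlS⟩ => by
    classical
    simpa [List.toFinset_card_of_nodup hn] using
      card_le_card (s := l.toFinset) (fun x hx => hlS x (List.mem_toFinset.1 hx))
  obtain ⟨v₀, hv₀⟩ := hS
  obtain ⟨l, ⟨hc, hn, hlS⟩, hmax⟩ :=
    paths.exists_max_image List.length hfin ⟨[v₀], List.isChain_singleton _, by simp, by simpa⟩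
  have hne : l ≠ [] := by
    rintro rfl
    simpa using hmax [v₀] ⟨List.isChain_singleton _, by simp, by simpa⟩
  have he : l.getLast hne ∈ S := hlS _ (List.getLast_mem hne)
  refine ⟨l, _, hc, hn, List.getLast?_eq_some_getLast hne, he, fun w hwS hew => ?_⟩
  by_contra hwl
  have hext : l ++ [w] ∈ paths := by
    refine ⟨hc.append (List.isChain_singleton _) ?_, List.nodup_append.2 ⟨hn, by simp, ?_⟩, ?_⟩
    · simp only [List.getLast?_eq_some_getLast hne, Option.mem_def, Option.some.injEq,
        List.head?_cons, forall_eq']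
      exact ⟨he, hwS, hew⟩
    · simp only [List.mem_singleton]
      rintro x hx _ rfl rfl
      exact hwl hx
    · simpa [or_imp, forall_and, hwS] using hlS
  simpa using hmax _ hext

/-- A non-extendable path in `D[S]` closes up into a long cycle at the earliest out-neighbour of
its last vertex. -/
theorem exists_long_dicycle_of_le_card_outNeighbors [Finite V] [DecidableEq V] [DecidableRel R]
    {S : Finset V} (hS : S.Nonempty) {m : ℕ} (hm : 1 ≤ m)
    (hdeg : ∀ v ∈ S, m ≤ #{w ∈ S | w ≠ v ∧ R v w}) :
    ∃ l, IsDicycleList (Induce R S) l ∧ m + 1 ≤ l.length := by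
  obtain ⟨l, e, hc, hn, hle, he, hNl⟩ := exists_nonextendable_path (R := R) hS
  set N := {w ∈ S | w ≠ e ∧ R e w}
  have hmN : m ≤ #N := hdeg e he
  have hNne : N.Nonempty := card_pos.1 (by omega)
  obtain ⟨u, huN, hu⟩ := N.exists_min_image l.idxOf hNne
  obtain ⟨huS, -, heu⟩ := mem_filter.1 huN
  have hidx : ∀ w ∈ N, l.idxOf w < l.length := fun w hw =>
    List.idxOf_lt_length_iff.2 (hNl w (mem_filter.1 hw).1 (mem_filter.1 hw).2.2)
  have hN : N ⊆ (l.drop (l.idxOf u)).toFinset.erase e := by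
    intro w hw
    refine mem_erase.2
      ⟨(mem_filter.1 hw).2.1, List.mem_toFinset.2 (List.mem_drop_iff_getElem.2 ?_)⟩
    exact ⟨l.idxOf w - l.idxOf u, by have := hu w hw; have := hidx w hw; omega, by
      simp only [Nat.add_sub_cancel' (hu w hw), List.getElem_idxOf]⟩
  have hlast : (l.drop (l.idxOf u)).getLast? = some e := by
    rw [List.getLast?_drop, if_neg (by have := hidx u huN; omega), hle]
  have heC : e ∈ (l.drop (l.idxOf u)).toFinset :=
    List.mem_toFinset.2 (List.mem_of_mem_getLast? hlast)
  have hlen : m + 1 ≤ (l.drop (l.idxOf u)).length := by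
    have := card_le_card hN
    rw [card_erase_of_mem heC, List.toFinset_card_of_nodup ((l.drop_sublist _).nodup hn)] at this
    omega
  have hhead : (l.drop (l.idxOf u)).head? = some u := by
    rw [List.head?_drop, List.getElem?_eq_getElem (hidx u huN), List.getElem_idxOf]
  exact ⟨l.drop (l.idxOf u), ⟨by omega, hc.drop _, (l.drop_sublist _).nodup hn, e, u, hlast,
    hhead, he, huS, heu⟩, hlen⟩

theorem DiColorable.of_erase [DecidableEq V] [DecidableRel R] {S : Finset V} {v : V} {m : ℕ}
    (hv : #{w ∈ S | w ≠ v ∧ R v w} < m) (h : DiColorable (Induce R (S.erase v)) m) :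
    DiColorable (Induce R S) m := by
  obtain ⟨f, hf⟩ := h
  obtain ⟨c, -, hc⟩ := exists_mem_notMem_of_card_lt_card
    (s := ({w ∈ S | w ≠ v ∧ R v w} : Finset V).image f) (t := univ)
    (by simpa using card_image_le.trans_lt hv)
  refine ⟨Function.update f v c, fun i ⟨l, hl⟩ => ?_⟩
  by_cases hvl : v ∈ l
  · -- the successor of `v` on the cycle is an out-neighbour of `v` of colour `c`
    obtain ⟨w, -, hwv, hvi, hwi, -, hwS, hvw⟩ := hl.exists_succ_s16 hvl
    refine hc (mem_image.2 ⟨w, mem_filter.2 ⟨hwS, hwv, hvw⟩, ?_⟩)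
    simp only [Set.mem_ofPred_eq, Function.update_self, Function.update_of_ne hwv] at hvi hwi
    rw [hwi, hvi]
  · refine hf i ⟨l, hl.mono_s16 fun x hx y hy ⟨hxi, hyi, hxS, hyS, hxy⟩ => ?_⟩
    have hxv : x ≠ v := fun h => hvl (h ▸ hx)
    have hyv : y ≠ v := fun h => hvl (h ▸ hy)
    simp only [Set.mem_ofPred_eq, Function.update_of_ne hxv, Function.update_of_ne hyv] at hxi hyi
    exact ⟨hxi, hyi, mem_erase.2 ⟨hxv, hxS⟩, mem_erase.2 ⟨hyv, hyS⟩, hxy⟩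

theorem diColorable_induce_empty {m : ℕ} (hm : 1 ≤ m) : DiColorable (Induce R ∅) m :=
  ⟨fun _ => ⟨0, hm⟩, fun _ ⟨l, hl⟩ => by
    obtain ⟨h2, -⟩ := id hl
    exact (hl.mono_s16 fun _ _ _ _ h => h.2.2).mem_of_induce
      (List.getElem_mem (l := l) (n := 0) (by omega))⟩

theorem exists_long_dicycle_or_diColorable [Finite V] (R : V → V → Prop) {m : ℕ} (hm : 1 ≤ m)
    (S : Finset V) :
    (∃ l, IsDicycleList (Induce R S) l ∧ m + 1 ≤ l.length) ∨ DiColorable (Induce R S) m := by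
  classical
  induction S using Finset.strongInduction with
  | H S ih =>
    by_cases hdeg : ∀ v ∈ S, m ≤ #{w ∈ S | w ≠ v ∧ R v w}
    · obtain rfl | hS := S.eq_empty_or_nonempty
      · exact .inr (by simpa using diColorable_induce_empty hm)
      · exact .inl (exists_long_dicycle_of_le_card_outNeighbors hS hm hdeg)
    · push Not at hdeg
      obtain ⟨v, hvS, hv⟩ := hdeg
      refine (ih _ (erase_ssubset hvS)).imp (fun ⟨l, hl, hlen⟩ => ⟨l, hl.mono_s16 ?_, hlen⟩)
        (DiColorable.of_erase hv)
      exact fun x _ y _ ⟨hx, hy, hxy⟩ => ⟨erase_subset v S hx, erase_subset v S hy, hxy⟩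

theorem induce_univ (R : V → V → Prop) : Induce R Set.univ = R := by
  ext u v
  simp [Induce]

theorem exists_long_dicycle_of_le_dichrom [Finite V] {k : ℕ} (hk : 2 ≤ k) (h : k ≤ dichrom R) :
    ∃ l, IsDicycleList R l ∧ k ≤ l.length := by
  have := Fintype.ofFinite V
  rcases exists_long_dicycle_or_diColorable R (m := k - 1) (by omega) univ with
    ⟨l, hl, hlen⟩ | hcol
  · exact ⟨l, hl.mono_s16 fun _ _ _ _ h => h.2.2, by omega⟩
  · rw [coe_univ, induce_univ] at hcol
    have := dichrom_le_of_diColorable hcol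
    omega

end Dichromatic

section EntryPath

variable {V : Type*} {A : V → V → Prop} {Z : Set V}

def IsEntryPath (A : V → V → Prop) (Z : Set V) (l : List V) : Prop :=
  l.IsChain A ∧ l.Nodup ∧ (∃ x, l.getLast? = some x ∧ x ∈ Z) ∧ ∀ y ∈ l.dropLast, y ∉ Z

namespace IsEntryPath

variable {l : List V}

theorem drop (h : IsEntryPath A Z l) {n : ℕ} (hn : n < l.length) : IsEntryPath A Z (l.drop n) := by
  obtain ⟨hc, hnd, ⟨x, hx, hxZ⟩, hZ⟩ := h
  refine ⟨hc.drop n, (l.drop_sublist n).nodup hnd, ⟨x, ?_, hxZ⟩, fun y hy => hZ y ?_⟩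
  · rwa [List.getLast?_drop, if_neg (by omega)]
  · rw [List.dropLast_drop_eq_drop_dropLast] at hy
    exact List.mem_of_mem_drop hy

theorem two_le_length (h : IsEntryPath A Z l) {v : V} (hv : l.head? = some v) (hvZ : v ∉ Z) :
    2 ≤ l.length := by
  obtain ⟨-, -, ⟨x, hx, hxZ⟩, -⟩ := h
  match l, hv, hx with
  | [_], rfl, rfl => exact absurd hxZ hvZ
  | _ :: _ :: _, _, _ => simp

theorem append {R T : List V} {u : V} (h : IsEntryPath A Z (u :: T)) (hR : R.IsChain A)
    (hRn : R.Nodup) (hRu : R.getLast? = some u) (hRZ : ∀ x ∈ R, x ∉ Z)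
    (hRT : ∀ x ∈ R, x ∉ T) : IsEntryPath A Z (R ++ T) := by
  obtain ⟨hc, hn, ⟨x, hx, hxZ⟩, hZ⟩ := h
  have hT : T ≠ [] := by
    rintro rfl
    exact hRZ u (List.mem_of_mem_getLast? hRu) (by simpa [← Option.some_inj.1 hx] using hxZ)
  refine ⟨hR.append (List.isChain_cons.1 hc).2 ?_, List.nodup_append.2 ⟨hRn, hn.of_cons, ?_⟩,
    ⟨x, ?_, hxZ⟩, ?_⟩
  · simpa [hRu] using (List.isChain_cons.1 hc).1
  · rintro a ha _ hb rfl
    exact hRT a ha hb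
  · rw [List.getLast?_append_of_ne_nil _ hT, ← hx, ← List.singleton_append,
      List.getLast?_append_of_ne_nil _ hT]
  · intro y hy
    rw [List.dropLast_append_of_ne_nil hT] at hy
    rcases List.mem_append.1 hy with hy | hy
    · exact hRZ y hy
    · exact hZ y (by simp [List.dropLast_cons_of_ne_nil hT, hy])

end IsEntryPath

theorem exists_isEntryPath_prefix {l : List V} (hc : l.IsChain A) (hn : l.Nodup)
    (hZ : ∃ z ∈ l, z ∈ Z) : ∃ P, IsEntryPath A Z P ∧ P.head? = l.head? := by
  classical
  have hnl : l.findIdx (· ∈ Z) < l.length := List.findIdx_lt_length_of_exists (by simpa using hZ)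
  set n := l.findIdx (· ∈ Z)
  refine ⟨l.take (n + 1), ⟨hc.take _, (l.take_sublist _).nodup hn, ⟨l[n], ?_, ?_⟩, ?_⟩, ?_⟩
  · simp [List.getLast?_take, List.getElem?_eq_getElem hnl]
  · simpa using List.findIdx_getElem (w := hnl)
  · intro y hy
    rw [List.dropLast_eq_take, List.take_take, List.length_take] at hy
    obtain ⟨i, hi, rfl⟩ := List.mem_take_iff_getElem.1 hy
    simpa using List.not_of_lt_findIdx (p := (· ∈ Z)) (i := i) (by omega)
  · simp [List.head?_take]

theorem exists_isEntryPath_head (hA : StronglyConnectedRel A) (hZ : Z.Nonempty) (v : V) :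
    ∃ P, IsEntryPath A Z P ∧ P.head? = some v := by
  obtain ⟨z, hz⟩ := hZ
  obtain ⟨l, hc, hn, hv, hl⟩ := hA v z
  rw [← hv]
  exact exists_isEntryPath_prefix hc hn ⟨z, List.mem_of_mem_getLast? hl, hz⟩

/-- A shortest entry path starting in `C` does the job. -/
theorem exists_isEntryPath_leaving_set (hA : StronglyConnectedRel A) (hZ : Z.Nonempty)
    {C : Set V} (hC : C.Nonempty) : ∃ u ∈ C, ∃ T, IsEntryPath A Z (u :: T) ∧ ∀ x ∈ T, x ∉ C := by
  obtain ⟨c, hc⟩ := hC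
  obtain ⟨P₀, hP₀, hP₀c⟩ := exists_isEntryPath_head hA hZ c
  obtain ⟨P, ⟨u, huC, hP, hPu⟩, hmin⟩ := (measure List.length).wf.has_min
    {P | ∃ u ∈ C, IsEntryPath A Z P ∧ P.head? = some u} ⟨P₀, c, hc, hP₀, hP₀c⟩
  obtain ⟨T, rfl⟩ : ∃ T, P = u :: T := by
    obtain _ | ⟨a, T⟩ := P
    · simp at hPu
    · exact ⟨T, by simpa using hPu⟩
  refine ⟨u, huC, T, hP, fun x hxT hxC => ?_⟩
  obtain ⟨i, hi, rfl⟩ := List.mem_iff_getElem.1 hxT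
  refine hmin ((u :: T).drop (i + 1)) ⟨_, hxC, hP.drop (by simp; omega), by simp⟩ ?_
  show ((u :: T).drop (i + 1)).length < (u :: T).length
  simp only [List.length_drop, List.length_cons]
  omega

theorem IsDicycleList.exists_long_isEntryPath (hA : StronglyConnectedRel A) (hZ : Z.Nonempty)
    {C : List V} (hC : IsDicycleList (Induce A Zᶜ) C) :
    ∃ P, IsEntryPath A Z P ∧ C.length + 1 ≤ P.length := by
  obtain ⟨u, huC, T, hP, hTC⟩ := exists_isEntryPath_leaving_set hA hZ (C := {x | x ∈ C})
    ⟨_, List.getElem_mem (n := 0) (by have := hC.1; omega)⟩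
  have hT := hP.two_le_length rfl (hC.mem_of_induce huC)
  obtain ⟨j, hj, rfl⟩ := List.mem_iff_getElem.1 huC
  have hRu : (C.rotate (j + 1)).getLast? = some C[j] := by
    rw [List.getLast?_eq_getElem?, List.length_rotate, List.getElem?_rotate (by omega),
      show C.length - 1 + (j + 1) = j + C.length by omega, Nat.add_mod_right,
      Nat.mod_eq_of_lt hj, List.getElem?_eq_getElem hj]
  have hR := hC.rotate (j + 1)
  refine ⟨_, hP.append (hR.mono_s16 fun _ _ _ _ h => h.2.2).isChain hR.2.2.1 hRu
    (fun x hx => hC.mem_of_induce (List.mem_rotate.1 hx))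
    (fun x hx hxT => hTC x hxT (List.mem_rotate.1 hx)), ?_⟩
  simp only [List.length_append, List.length_rotate, List.length_cons] at hT ⊢
  omega

end EntryPath

/-- In a strongly connected digraph, if the complement of a nonempty proper set `Z` has
dichromatic number at least `q - 1` (`q ≥ 2`), then there is a directed path of length
exactly `q - 1` meeting `Z` only in its final vertex. -/
theorem stmt_16 {V : Type*} [Fintype V] (A : V → V → Prop)
    (hSC : StronglyConnectedRel A) (Z : Set V) (hne : Z.Nonempty)
    (hprop : Z ≠ Set.univ) (q : ℕ) (hq : 2 ≤ q)
    (h : q - 1 ≤ dichrom (Induce A Zᶜ)) :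
    ∃ (l : List V) (x : V), l.Chain' A ∧ l.Nodup ∧ l.length = q ∧
      l.getLast? = some x ∧ x ∈ Z ∧ ∀ z ∈ l.dropLast, z ∉ Z := by
  obtain ⟨P, hP, hPq⟩ : ∃ P, IsEntryPath A Z P ∧ q ≤ P.length := by
    obtain rfl | hq3 : q = 2 ∨ 3 ≤ q := by omega
    · obtain ⟨v, hv⟩ := (Set.ne_univ_iff_exists_notMem Z).1 hprop
      obtain ⟨P, hP, hPv⟩ := exists_isEntryPath_head hSC hne v
      exact ⟨P, hP, hP.two_le_length hPv hv⟩
    · obtain ⟨C, hC, hCq⟩ := exists_long_dicycle_of_le_dichrom (by omega : 2 ≤ q - 1) h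
      obtain ⟨P, hP, hPC⟩ := hC.exists_long_isEntryPath hSC hne
      exact ⟨P, hP, by omega⟩
  obtain ⟨hc, hn, ⟨x, hx, hxZ⟩, hZ⟩ := hP.drop (n := P.length - q) (by omega)
  exact ⟨_, x, hc, hn, by simp only [List.length_drop]; omega, hx, hxZ, hZ⟩
end
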